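/- arXiv:1304.0125 — 3 statements merged into one kernel-verified Lean document; each statement's English description precedes it below -/
import Mathlib

section
/- Let A be the adjacency matrix of a finite simple graph G on n vertices and A_d the adjacency matrix of its d-distance graph. If for each k with d ≤ k ≤ n + d − 1 the entry (A^k)_{ij} is a constant f(k) independent of the pair i,j whenever dist(i,j) = d, then G is d-walk regular, i.e., for every k ≥ d the entry (A^k)_{ij} is independent of the pair i,j with dist(i,j) = d. -/
/-!
By Cayley–Hamilton, `A ^ n` is a linear combination of `1, A, …, A ^ (n - 1)`, so every power
`A ^ k` with `k ≥ d + n` is a linear combination of `n` strictly smaller powers, all of exponent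
at least `d`. Hence any linear functional vanishing on `A ^ d, …, A ^ (d + n - 1)` vanishes on
every `A ^ k`, `k ≥ d`; apply this to `M ↦ M i j - M p q`.
-/

open Matrix Finset

namespace Matrix

variable {ι R M : Type*} [Fintype ι] [DecidableEq ι] [CommRing R] [Nontrivial R]
  [AddCommGroup M] [Module R M]

theorem pow_card_eq_neg_sum_charpoly_coeff_smul (A : Matrix ι ι R) :
    A ^ Fintype.card ι = -∑ m ∈ range (Fintype.card ι), A.charpoly.coeff m • A ^ m := by
  have h := A.aeval_self_charpoly
  rw [A.charpoly_monic.as_sum, charpoly_natDegree_eq_dim] at h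
  simp only [map_add, map_pow, Polynomial.aeval_X, map_sum, map_mul, Polynomial.aeval_C] at h
  simpa only [Algebra.smul_def] using eq_neg_of_add_eq_zero_left h

theorem map_pow_eq_zero_of_forall_lt_add_card (A : Matrix ι ι R) (L : Matrix ι ι R →ₗ[R] M)
    {d : ℕ} (h : ∀ k, d ≤ k → k < d + Fintype.card ι → L (A ^ k) = 0) :
    ∀ k, d ≤ k → L (A ^ k) = 0 := by
  intro k
  induction k using Nat.strong_induction_on with
  | _ k ih =>
    intro hdk
    by_cases hk : k < d + Fintype.card ι
    · exact h k hdk hk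
    have hsplit : A ^ k = A ^ (k - Fintype.card ι) * A ^ Fintype.card ι := by
      rw [← pow_add]; congr 1; omega
    rw [hsplit, pow_card_eq_neg_sum_charpoly_coeff_smul, mul_neg, mul_sum, map_neg, map_sum,
      neg_eq_zero]
    refine sum_eq_zero fun m hm => ?_
    have hm : m < Fintype.card ι := mem_range.mp hm
    rw [Matrix.mul_smul, ← pow_add, map_smul, ih _ (by omega) (by omega), smul_zero]

end Matrix

/-- If `(A^k) i j` is independent of the pair `i j` at distance `d` for all
`d ≤ k ≤ n + d - 1`, then this holds for all `k ≥ d`, i.e. `G` is `d`-walk regular. -/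
theorem stmt_1 {n : ℕ} (G : SimpleGraph (Fin n)) [DecidableRel G.Adj] (d : ℕ)
    (hf : ∀ k, d ≤ k → k ≤ n + d - 1 → ∀ i j p q : Fin n,
      G.Reachable i j → G.dist i j = d → i ≠ j →
      G.Reachable p q → G.dist p q = d → p ≠ q →
      (G.adjMatrix ℝ ^ k) i j = (G.adjMatrix ℝ ^ k) p q) :
    ∀ k, d ≤ k → ∀ i j p q : Fin n,
      G.Reachable i j → G.dist i j = d → i ≠ j →
      G.Reachable p q → G.dist p q = d → p ≠ q →
      (G.adjMatrix ℝ ^ k) i j = (G.adjMatrix ℝ ^ k) p q := by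
  intro k hdk i j p q hij hdij hneij hpq hdpq hnepq
  let L := entryLinearMap ℝ ℝ i j - entryLinearMap ℝ ℝ p q
  suffices L (G.adjMatrix ℝ ^ k) = 0 from sub_eq_zero.mp this
  refine (G.adjMatrix ℝ).map_pow_eq_zero_of_forall_lt_add_card L (fun k' hdk' hk' => ?_) k hdk
  rw [Fintype.card_fin] at hk'
  exact sub_eq_zero.mpr (hf k' hdk' (by omega) i j p q hij hdij hneij hpq hdpq hnepq)
end

section
/- Let G be a d-walk regular graph (d > 0) with adjacency matrix A and d-function f. Then for every vertex i and every k ≥ d, (A^{2k})_{ii} = Σ_s (A^k)_{is}² and the contribution from vertices at distance exactly d from i equals f(k)² · N_i(d), where N_i(d) is the number of vertices at distance d from i. Consequently, if in addition (A^{2k})_{ii} − Σ_{s : dist(i,s) ≠ d} (A^k)_{is}² is independent of i for some k with f(k) ≠ 0, then N_i(d) is independent of i, i.e., the d-distance graph G_d is regular. -/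
open Matrix Finset

/-! Since `A` is symmetric, `(A^{2k})_{ii} = Σ_s (A^k)_{is}²`. On the distance-`d` sphere around `i`
every term equals `f(k)²`, so removing the terms off the sphere leaves `f(k)² · N_i(d)`. If this is
independent of `i` and `f(k) ≠ 0`, then so is `N_i(d)`. -/

theorem Finset.sum_sq_eq_card_mul_of_forall_eq {ι R : Type*} [CommSemiring R] {S : Finset ι}
    {g : ι → R} {c : R} (hg : ∀ s ∈ S, g s = c) :
    ∑ s ∈ S, g s ^ 2 = c ^ 2 * #S := by
  rw [sum_eq_card_nsmul fun s hs => by rw [hg s hs], nsmul_eq_mul, mul_comm]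

namespace Matrix

section CommSemiring

variable {V R : Type*} [Fintype V] [CommSemiring R]

theorem IsSymm.mul_self_apply_self {A : Matrix V V R} (hA : A.IsSymm) (i : V) :
    (A * A) i i = ∑ s, A i s ^ 2 := by
  simp only [mul_apply, sq, hA.apply i]

variable [DecidableEq V]

theorem IsSymm.pow_two_mul_apply_self {A : Matrix V V R} (hA : A.IsSymm) (k : ℕ) (i : V) :
    (A ^ (2 * k)) i i = ∑ s, (A ^ k) i s ^ 2 := by
  rw [two_mul, pow_add, (hA.pow k).mul_self_apply_self]

end CommSemiring

theorem IsSymm.pow_two_mul_apply_self_sub_sum_filter_not {V R : Type*} [Fintype V]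
    [DecidableEq V] [CommRing R] {A : Matrix V V R} (hA : A.IsSymm) (k : ℕ) (i : V) (P : V → Prop)
    [DecidablePred P] {c : R} (hc : ∀ s, P s → (A ^ k) i s = c) :
    (A ^ (2 * k)) i i - ∑ s ∈ univ.filter (fun s => ¬P s), (A ^ k) i s ^ 2 =
      c ^ 2 * #(univ.filter P) := by
  rw [hA.pow_two_mul_apply_self, ← sum_filter_add_sum_filter_not univ P,
    sum_sq_eq_card_mul_of_forall_eq fun s hs => hc s (mem_filter.mp hs).2, add_sub_cancel_right]

end Matrix

theorem stmt_9_general {n : ℕ} (G : SimpleGraph (Fin n)) [DecidableRel G.Adj]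
    (d : ℕ) (f : ℕ → ℝ)
    (hf : ∀ k, d ≤ k → ∀ i s, G.Reachable i s → G.dist i s = d →
      (G.adjMatrix ℝ ^ k) i s = f k)
    (k : ℕ) (hk : d ≤ k) (hfk : f k ≠ 0)
    (hindep : ∀ i j : Fin n,
      (G.adjMatrix ℝ ^ (2 * k)) i i -
        ∑ s ∈ univ.filter (fun s => ¬(G.Reachable i s ∧ G.dist i s = d)),
          ((G.adjMatrix ℝ ^ k) i s) ^ 2 =
      (G.adjMatrix ℝ ^ (2 * k)) j j -
        ∑ s ∈ univ.filter (fun s => ¬(G.Reachable j s ∧ G.dist j s = d)),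
          ((G.adjMatrix ℝ ^ k) j s) ^ 2) :
    (∀ m, d ≤ m → ∀ i, (G.adjMatrix ℝ ^ (2 * m)) i i =
      ∑ s, ((G.adjMatrix ℝ ^ m) i s) ^ 2) ∧
    (∀ m, d ≤ m → ∀ i,
      ∑ s ∈ univ.filter (fun s => G.Reachable i s ∧ G.dist i s = d),
        ((G.adjMatrix ℝ ^ m) i s) ^ 2 =
      f m ^ 2 * (univ.filter (fun s => G.Reachable i s ∧ G.dist i s = d)).card) ∧
    (∀ i j : Fin n,
      (univ.filter (fun s => G.Reachable i s ∧ G.dist i s = d)).card =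
      (univ.filter (fun s => G.Reachable j s ∧ G.dist j s = d)).card) := by
  have hA : (G.adjMatrix ℝ).IsSymm := G.isSymm_adjMatrix
  refine ⟨fun m _ i => hA.pow_two_mul_apply_self m i,
    fun m hm i => sum_sq_eq_card_mul_of_forall_eq fun s hs =>
      hf m hm i s (mem_filter.mp hs).2.1 (mem_filter.mp hs).2.2, fun i j => ?_⟩
  have hsphere : ∀ i, (G.adjMatrix ℝ ^ (2 * k)) i i -
      ∑ s ∈ univ.filter (fun s => ¬(G.Reachable i s ∧ G.dist i s = d)),
        ((G.adjMatrix ℝ ^ k) i s) ^ 2 =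
      f k ^ 2 * #(univ.filter (fun s => G.Reachable i s ∧ G.dist i s = d)) := fun i =>
    hA.pow_two_mul_apply_self_sub_sum_filter_not k i _ fun s hs => hf k hk i s hs.1 hs.2
  have h := hindep i j
  rw [hsphere i, hsphere j] at h
  exact_mod_cast mul_left_cancel₀ (pow_ne_zero 2 hfk) h

/-- For a `d`-walk regular graph (`d > 0`) with `d`-function `f`:
`(A^{2k})_{ii} = Σ_s (A^k)_{is}²`, the contribution of vertices at distance `d` equals
`f k ^ 2 * N_i(d)`, and if the remaining contribution is independent of `i` for some
`k ≥ d` with `f k ≠ 0`, then the `d`-distance graph is regular. -/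
theorem stmt_9 {n : ℕ} (G : SimpleGraph (Fin n)) [DecidableRel G.Adj]
    (d : ℕ) (hd : 0 < d) (f : ℕ → ℝ)
    (hf : ∀ k, d ≤ k → ∀ i s, G.Reachable i s → G.dist i s = d →
      (G.adjMatrix ℝ ^ k) i s = f k)
    (k : ℕ) (hk : d ≤ k) (hfk : f k ≠ 0)
    (hindep : ∀ i j : Fin n,
      (G.adjMatrix ℝ ^ (2 * k)) i i -
        ∑ s ∈ univ.filter (fun s => ¬(G.Reachable i s ∧ G.dist i s = d)),
          ((G.adjMatrix ℝ ^ k) i s) ^ 2 =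
      (G.adjMatrix ℝ ^ (2 * k)) j j -
        ∑ s ∈ univ.filter (fun s => ¬(G.Reachable j s ∧ G.dist j s = d)),
          ((G.adjMatrix ℝ ^ k) j s) ^ 2) :
    (∀ m, d ≤ m → ∀ i, (G.adjMatrix ℝ ^ (2 * m)) i i =
      ∑ s, ((G.adjMatrix ℝ ^ m) i s) ^ 2) ∧
    (∀ m, d ≤ m → ∀ i,
      ∑ s ∈ univ.filter (fun s => G.Reachable i s ∧ G.dist i s = d),
        ((G.adjMatrix ℝ ^ m) i s) ^ 2 =
      f m ^ 2 * (univ.filter (fun s => G.Reachable i s ∧ G.dist i s = d)).card) ∧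
    (∀ i j : Fin n,
      (univ.filter (fun s => G.Reachable i s ∧ G.dist i s = d)).card =
      (univ.filter (fun s => G.Reachable j s ∧ G.dist j s = d)).card) :=
  stmt_9_general G d f hf k hk hfk hindep
end

section
/- A regular graph G is 1-walk regular if and only if its line graph L(G) is 0-walk regular, in the sense that the number of closed walks of each length k at a vertex of L(G) corresponding to edge {u,v} of G is determined by the numbers of walks in G and is independent of the edge when and only when (A^k)_{uv} is independent of the edge {u,v} for all k ≥ 1. Formally: for a k-regular graph G with adjacency matrix A and line graph adjacency matrix A_L = B^T B − 2I (B the incidence matrix), the diagonal of A_L^m is constant for all m if and only if (A^k)_{uv} is constant over edges {u,v} for all k ≥ 1. -/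
/-!
With `B` the edge incidence matrix, `Bᵀ * B = A_L + 2` and `B * Bᵀ = A + r`. Adding a scalar does
not change the span of the powers of a matrix, and `(Bᵀ * B) ^ (m + 1) = Bᵀ * (B * Bᵀ) ^ m * B`, so
the diagonals of all powers of `A_L` are constant iff the diagonals of all `Bᵀ * A ^ k * B` are.
At the edge `uv` that diagonal entry is `(A ^ k) u u + (A ^ k) v v + 2 * (A ^ k) u v`, and for an
`r`-regular graph whose `A ^ k` is constant (say `a`) on edges, `(A ^ (k + 1)) x x = r * a` for
every vertex `x`; induction on `k` then gives both directions.
-/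

open Matrix Finset

section PowersInSubmodule

variable {R A : Type*}

theorem forall_pow_mem_iff_adjoin_le [CommSemiring R] [Semiring A] [Algebra R A]
    (S : Submodule R A) (x : A) :
    (∀ m : ℕ, x ^ m ∈ S) ↔ Subalgebra.toSubmodule (Algebra.adjoin R {x}) ≤ S := by
  rw [Algebra.adjoin_eq_span, Submodule.span_le]
  simp [Set.subset_def, Submonoid.mem_closure_singleton]

theorem Algebra.adjoin_singleton_add_algebraMap [CommRing R] [Ring A] [Algebra R A]
    (x : A) (c : R) : Algebra.adjoin R {x + algebraMap R A c} = Algebra.adjoin R {x} := by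
  refine le_antisymm (Algebra.adjoin_singleton_le ?_) (Algebra.adjoin_singleton_le ?_)
  · exact add_mem (Algebra.self_mem_adjoin_singleton R x) (Subalgebra.algebraMap_mem _ c)
  · simpa using sub_mem (Algebra.self_mem_adjoin_singleton R (x + algebraMap R A c))
      (Subalgebra.algebraMap_mem _ c)

theorem forall_add_algebraMap_pow_mem_iff [CommRing R] [Ring A] [Algebra R A]
    (S : Submodule R A) (x : A) (c : R) :
    (∀ m : ℕ, (x + algebraMap R A c) ^ m ∈ S) ↔ ∀ m : ℕ, x ^ m ∈ S := by
  simp only [forall_pow_mem_iff_adjoin_le, Algebra.adjoin_singleton_add_algebraMap]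

end PowersInSubmodule

namespace Matrix

def constDiagSubmodule (R ι : Type*) [Semiring R] : Submodule R (Matrix ι ι R) where
  carrier := {M | ∀ i j, M i i = M j j}
  add_mem' hM hN i j := by simp [hM i j, hN i j]
  zero_mem' _ _ := rfl
  smul_mem' c M hM i j := by simp [hM i j]

variable {ι κ R : Type*}

theorem one_mem_constDiagSubmodule [DecidableEq ι] [Semiring R] :
    (1 : Matrix ι ι R) ∈ constDiagSubmodule R ι :=
  fun i j => (one_apply_eq i).trans (one_apply_eq j).symm

theorem mul_pow_succ [Fintype ι] [Fintype κ] [DecidableEq ι] [DecidableEq κ] [Semiring R]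
    (Q : Matrix κ ι R) (P : Matrix ι κ R) (m : ℕ) :
    (Q * P) ^ (m + 1) = Q * (P * Q) ^ m * P := by
  induction m with
  | zero => simp
  | succ m ih => rw [pow_succ, ih, pow_succ]; simp only [Matrix.mul_assoc]

theorem forall_mul_pow_mem_iff [Fintype ι] [Fintype κ] [DecidableEq ι] [DecidableEq κ]
    [CommSemiring R] (S : Submodule R (Matrix κ κ R)) (h1 : 1 ∈ S)
    (Q : Matrix κ ι R) (P : Matrix ι κ R) :
    (∀ m : ℕ, (Q * P) ^ m ∈ S) ↔
      ∀ m : ℕ, (P * Q) ^ m ∈ S.comap (mulLeftLinearMap κ R Q ∘ₗ mulRightLinearMap ι R P) := by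
  simp only [Submodule.mem_comap, LinearMap.comp_apply, mulLeftLinearMap_apply,
    mulRightLinearMap_apply, ← Matrix.mul_assoc, ← mul_pow_succ]
  exact ⟨fun h m => h (m + 1), fun h m => m.casesOn (by simpa using h1) h⟩

end Matrix

namespace SimpleGraph

variable {V R : Type*} (G : SimpleGraph V)

def IsConstOnEdges {α : Type*} (f : V → V → α) : Prop :=
  ∀ u v p q, G.Adj u v → G.Adj p q → f u v = f p q

def edgeIncMatrix (R : Type*) [Zero R] [One R] [DecidableEq V] [DecidableRel G.Adj] :
    Matrix V G.edgeSet R :=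
  (G.incMatrix R).submatrix id (↑)

variable {G} [DecidableEq V]

theorem isConstOnEdges_one [Zero R] [One R] : G.IsConstOnEdges (1 : Matrix V V R) :=
  fun _ _ _ _ huv hpq => by rw [one_apply_ne huv.ne, one_apply_ne hpq.ne]

variable [DecidableRel G.Adj]

theorem edgeIncMatrix_mul_transpose [Fintype V] [Semiring R] :
    G.edgeIncMatrix R * (G.edgeIncMatrix R)ᵀ =
      G.adjMatrix R + diagonal fun v => (G.degree v : R) := by
  have hcols : G.edgeIncMatrix R * (G.edgeIncMatrix R)ᵀ = G.incMatrix R * (G.incMatrix R)ᵀ := by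
    ext u w
    simp only [edgeIncMatrix, mul_apply, transpose_apply, submatrix_apply, id]
    rw [sum_set_coe (f := fun e => G.incMatrix R u e * G.incMatrix R w e)]
    refine sum_subset (subset_univ _) fun e _ he => ?_
    rw [G.incMatrix_of_notMem_incidenceSet fun h => he (Set.mem_toFinset.mpr h.1), zero_mul]
  rw [hcols, incMatrix_mul_transpose]
  ext u w
  by_cases huw : u = w
  · subst huw; simp
  · simp [huw, adjMatrix_apply]

theorem transpose_edgeIncMatrix_mul_mul_apply [Fintype V] [NonAssocSemiring R]
    (M : Matrix V V R) {u v : V} (h : s(u, v) ∈ G.edgeSet) :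
    ((G.edgeIncMatrix R)ᵀ * M * G.edgeIncMatrix R) ⟨s(u, v), h⟩ ⟨s(u, v), h⟩ =
      M u u + M u v + M v u + M v v := by
  have huv : u ≠ v := (G.mem_edgeSet.mp h).ne
  have hcol : ∀ x, G.edgeIncMatrix R x ⟨s(u, v), h⟩ =
      (if x = u then 1 else 0) + (if x = v then 1 else 0) := by
    intro x
    by_cases hxu : x = u <;> by_cases hxv : x = v <;>
      simp_all [edgeIncMatrix, incMatrix_apply', incidenceSet, huv.symm]
  simp only [mul_apply, transpose_apply, hcol, add_mul, mul_add, ite_mul,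
    mul_ite, one_mul, mul_one, zero_mul, mul_zero, sum_add_distrib, sum_ite_eq',
    mem_univ, if_true]
  abel

variable [Fintype V] {r : ℕ}

theorem IsRegularOfDegree.adjMatrix_pow_succ_apply_self [Semiring R]
    (hreg : G.IsRegularOfDegree r) {k : ℕ} (hk : G.IsConstOnEdges (G.adjMatrix R ^ k))
    {p q : V} (hpq : G.Adj p q) (x : V) :
    (G.adjMatrix R ^ (k + 1)) x x = r * (G.adjMatrix R ^ k) p q := by
  rw [pow_succ', adjMatrix_mul_apply,
    sum_congr rfl fun w hw => hk w x p q ((G.mem_neighborFinset x w).mp hw).symm hpq,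
    sum_const, card_neighborFinset_eq_degree, hreg.degree_eq, nsmul_eq_mul]

theorem IsRegularOfDegree.forall_sandwich_mem_constDiag_iff [Field R] [CharZero R]
    (hreg : G.IsRegularOfDegree r) :
    (∀ k : ℕ, (G.edgeIncMatrix R)ᵀ * G.adjMatrix R ^ k * G.edgeIncMatrix R ∈
      constDiagSubmodule R G.edgeSet) ↔ ∀ k : ℕ, G.IsConstOnEdges (G.adjMatrix R ^ k) := by
  have hsand : ∀ k {u v} (h : s(u, v) ∈ G.edgeSet),
      ((G.edgeIncMatrix R)ᵀ * G.adjMatrix R ^ k * G.edgeIncMatrix R) ⟨s(u, v), h⟩ ⟨s(u, v), h⟩ =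
        (G.adjMatrix R ^ k) u u + (G.adjMatrix R ^ k) v v + 2 * (G.adjMatrix R ^ k) u v :=
    fun k u v h => by
      rw [transpose_edgeIncMatrix_mul_mul_apply, (G.isSymm_adjMatrix.pow k).apply u v]
      ring
  constructor
  · intro h k
    induction k with
    | zero => simpa using isConstOnEdges_one
    | succ k ih =>
      intro u v p q huv hpq
      have := h (k + 1) ⟨s(u, v), huv⟩ ⟨s(p, q), hpq⟩
      rw [hsand (k + 1) huv, hsand (k + 1) hpq] at this
      simp only [hreg.adjMatrix_pow_succ_apply_self ih hpq] at this
      simpa using this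
  · rintro h k ⟨e, he⟩ ⟨e', he'⟩
    induction e using Sym2.ind with | _ u v => ?_
    induction e' using Sym2.ind with | _ p q => ?_
    rw [hsand k he, hsand k he']
    cases k with
    | zero => simp [one_apply_ne (G.mem_edgeSet.mp he).ne, one_apply_ne (G.mem_edgeSet.mp he').ne]
    | succ k =>
      simp only [hreg.adjMatrix_pow_succ_apply_self (h k) he, h (k + 1) u v p q he he']

end SimpleGraph

/-- A regular graph `G` is `1`-walk regular iff its line graph is `0`-walk regular:
with incidence matrix `B` (restricted to the edge set) and line-graph adjacency
matrix `A_L = Bᵀ * B - 2 • 1`, the diagonal of `A_L ^ m` is constant for all `m`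
iff `(A^k) u v` is constant over edges `{u, v}` of `G` for all `k ≥ 1`. -/
theorem stmt_17 {n : ℕ} (G : SimpleGraph (Fin n)) [DecidableRel G.Adj]
    (r : ℕ) (hreg : G.IsRegularOfDegree r)
    (B : Matrix (Fin n) G.edgeSet ℝ)
    (hB : ∀ (v : Fin n) (e : G.edgeSet), B v e = G.incMatrix ℝ v (e : Sym2 (Fin n)))
    (AL : Matrix G.edgeSet G.edgeSet ℝ)
    (hAL : AL = Bᵀ * B - 2 • (1 : Matrix G.edgeSet G.edgeSet ℝ)) :
    (∀ (m : ℕ) (e e' : G.edgeSet), (AL ^ m) e e = (AL ^ m) e' e') ↔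
    (∀ k : ℕ, 1 ≤ k → ∀ u v p q : Fin n, G.Adj u v → G.Adj p q →
      (G.adjMatrix ℝ ^ k) u v = (G.adjMatrix ℝ ^ k) p q) := by
  have hBdef : B = G.edgeIncMatrix ℝ := Matrix.ext hB
  have hBtB : Bᵀ * B = AL + algebraMap ℝ _ 2 := by
    rw [hAL, two_nsmul, map_ofNat, one_add_one_eq_two, sub_add_cancel]
  have hBBt : B * Bᵀ = G.adjMatrix ℝ + algebraMap ℝ _ r := by
    rw [hBdef, SimpleGraph.edgeIncMatrix_mul_transpose, algebraMap_eq_diagonal]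
    simp [hreg.degree_eq]
  let sandwich := mulLeftLinearMap _ ℝ Bᵀ ∘ₗ mulRightLinearMap _ ℝ B
  calc (∀ (m : ℕ) (e e' : G.edgeSet), (AL ^ m) e e = (AL ^ m) e' e')
      ↔ ∀ m : ℕ, AL ^ m ∈ constDiagSubmodule ℝ G.edgeSet := Iff.rfl
    _ ↔ ∀ m : ℕ, (Bᵀ * B) ^ m ∈ constDiagSubmodule ℝ G.edgeSet := by
      rw [hBtB, forall_add_algebraMap_pow_mem_iff]
    _ ↔ ∀ m : ℕ, (B * Bᵀ) ^ m ∈ (constDiagSubmodule ℝ G.edgeSet).comap sandwich :=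
      forall_mul_pow_mem_iff _ one_mem_constDiagSubmodule _ _
    _ ↔ ∀ m : ℕ, G.adjMatrix ℝ ^ m ∈ (constDiagSubmodule ℝ G.edgeSet).comap sandwich := by
      rw [hBBt, forall_add_algebraMap_pow_mem_iff]
    _ ↔ ∀ k : ℕ, G.IsConstOnEdges (G.adjMatrix ℝ ^ k) := by
      simpa only [sandwich, Submodule.mem_comap, LinearMap.comp_apply, mulLeftLinearMap_apply,
        mulRightLinearMap_apply, ← Matrix.mul_assoc, hBdef]
        using hreg.forall_sandwich_mem_constDiag_iff
    _ ↔ _ := ⟨fun h k _ => h k, fun h k =>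
      k.casesOn (by simpa using SimpleGraph.isConstOnEdges_one) fun k => h (k + 1) k.succ_pos⟩
end
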